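/- Define u : (0, ∞) → ℝ² by u(t) = ((2π²)^{−1/3}·t^{2/3}, (2π²)^{−1/3}·t^{−1/3}), and let G₁(x,y) = (−(1/4)·x³/y⁴ + (5/12)·x²/y³ − (1/6)·x/y², (1/8)·x²/y³ − (5/24)·x/y² + (1/12)·(1/y)). Then for every t > 0 one has G₁(u(t)) = k₁(t)·u'(t), where k₁(t) = (1/8)·(2π²)^{2/3}·t^{5/3}·(−3t² + 5t − 2). In particular, the vector field G₁ is tangent to the image of u (the curve of volume-normalized Berger metrics). -/
import Mathlib


open Real Filter Set Topology
open scoped ENNReal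

/-- The vector field of the volume-normalized spinor-flow system on Berger spheres
in the case `aμ = 1`. -/
noncomputable def G1 (x y : ℝ) : ℝ × ℝ :=
  (-(1/4) * x^3 / y^4 + (5/12) * x^2 / y^3 - (1/6) * x / y^2,
   (1/8) * x^2 / y^3 - (5/24) * x / y^2 + (1/12) * (1/y))
/-- First component of the curve of volume-one Berger metrics:
`u₁(t) = (2π²)^(-1/3) t^(2/3)`. -/
noncomputable def u1 (t : ℝ) : ℝ := (2 * π^2) ^ (-(1:ℝ)/3) * t ^ ((2:ℝ)/3)

/-- Second component: `u₂(t) = (2π²)^(-1/3) t^(-1/3)`. -/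
noncomputable def u2 (t : ℝ) : ℝ := (2 * π^2) ^ (-(1:ℝ)/3) * t ^ (-(1:ℝ)/3)

/-- The reparametrization factor `k₁(t) = (1/8)(2π²)^(2/3) t^(5/3)(-3t² + 5t - 2)`. -/
noncomputable def k1 (t : ℝ) : ℝ :=
  (1/8) * (2 * π^2) ^ ((2:ℝ)/3) * t ^ ((5:ℝ)/3) * (-3*t^2 + 5*t - 2)

/-- For every `t > 0`, `G₁(u(t)) = k₁(t) · u'(t)`: the vector field `G₁` is tangent to
the curve of volume-normalized Berger metrics. -/
theorem G1_tangent_to_u (t : ℝ) (ht : 0 < t) :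
    HasDerivAt u1 ((2 * π^2) ^ (-(1:ℝ)/3) * ((2:ℝ)/3) * t ^ (-(1:ℝ)/3)) t ∧
    HasDerivAt u2 ((2 * π^2) ^ (-(1:ℝ)/3) * (-(1:ℝ)/3) * t ^ (-(4:ℝ)/3)) t ∧
    G1 (u1 t) (u2 t) =
      (k1 t * ((2 * π^2) ^ (-(1:ℝ)/3) * ((2:ℝ)/3) * t ^ (-(1:ℝ)/3)),
       k1 t * ((2 * π^2) ^ (-(1:ℝ)/3) * (-(1:ℝ)/3) * t ^ (-(4:ℝ)/3))) := by
  have hA : (0:ℝ) < 2 * π^2 := by positivity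
  refine ⟨?_, ?_, ?_⟩
  · have h1 : HasDerivAt u1 ((2 * π^2) ^ (-(1:ℝ)/3) * ((2:ℝ)/3 * t ^ ((2:ℝ)/3 - 1))) t :=
      (Real.hasDerivAt_rpow_const (Or.inl ht.ne')).const_mul _
    have : (2:ℝ)/3 - 1 = -(1:ℝ)/3 := by norm_num
    rw [this, ← mul_assoc] at h1
    exact h1
  · have h1 : HasDerivAt u2 ((2 * π^2) ^ (-(1:ℝ)/3) * (-(1:ℝ)/3 * t ^ (-(1:ℝ)/3 - 1))) t :=
      (Real.hasDerivAt_rpow_const (Or.inl ht.ne')).const_mul _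
    have : -(1:ℝ)/3 - 1 = -(4:ℝ)/3 := by norm_num
    rw [this, ← mul_assoc] at h1
    exact h1
  · set c : ℝ := (2 * π^2) ^ (-(1:ℝ)/3) with hcdef
    have hc : 0 < c := Real.rpow_pos_of_pos hA _
    set s : ℝ := t ^ ((1:ℝ)/3) with hsdef
    have hs : 0 < s := Real.rpow_pos_of_pos ht _
    have e : ∀ n : ℕ, t ^ ((n:ℝ)/3) = s ^ n := by
      intro n
      rw [hsdef, ← Real.rpow_natCast (t ^ ((1:ℝ)/3)) n, ← Real.rpow_mul ht.le]
      congr 1; ring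
    have hts : t = s ^ 3 := by
      have := e 3; norm_num at this; exact this
    have e2 : t ^ ((2:ℝ)/3) = s ^ 2 := by have := e 2; norm_num at this; exact this
    have e5 : t ^ ((5:ℝ)/3) = s ^ 5 := by have := e 5; norm_num at this; exact this
    have em1 : t ^ (-(1:ℝ)/3) = (s ^ 1)⁻¹ := by
      rw [show (-(1:ℝ)/3) = -((1:ℝ)/3) by norm_num, Real.rpow_neg ht.le]
      rw [show t ^ ((1:ℝ)/3) = s ^ 1 by simpa using e 1]
    have em4 : t ^ (-(4:ℝ)/3) = (s ^ 4)⁻¹ := by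
      have h4 := e 4; norm_num at h4
      rw [show (-(4:ℝ)/3) = -((4:ℝ)/3) by norm_num, Real.rpow_neg ht.le, h4]
    have hcc : c * c = (2 * π^2) ^ (-(2:ℝ)/3) := by
      rw [hcdef, ← Real.rpow_add hA]; norm_num
    have hA2 : (2 * π^2) ^ ((2:ℝ)/3) = (c * c)⁻¹ := by
      rw [hcc, show (-(2:ℝ)/3) = -((2:ℝ)/3) by norm_num, Real.rpow_neg hA.le, inv_inv]
    rw [G1, u1, u2, k1, ← hcdef, hA2, e2, e5, em1, em4, hts]
    have hs' : s ≠ 0 := hs.ne'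
    have hc' : c ≠ 0 := hc.ne'
    simp only [Prod.mk.injEq]
    constructor <;> · field_simp; ring
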